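/- Let M be a nonsingular square matrix over a field indexed by a finite set V, and let A ⊆ V. Then rank(M⁻¹ + I_A) = |V \ A| + rank(M[A] + I), where M[A] is the principal submatrix of M on A and I is the identity on A. Equivalently, rank(M) − corank((M + I_A)[A]) = rank(M⁻¹ + I_A). -/

import Mathlib

/-!
`M⁻¹ + I_A = M⁻¹ (1 + M I_A)`, so the two have the same rank. Listing `A` before `V \ A`, the
matrix `1 + M I_A` is block lower triangular with diagonal blocks `M[A] + 1` and `1`; clearing the
off-diagonal block by an invertible column operation leaves a block diagonal matrix, whose rank is
`rank (M[A] + 1) + |V \ A|`.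
-/

open Matrix

/-- Principal submatrix of `M` on the index set `A`. -/
def psub {V F : Type*} [Fintype V] [DecidableEq V] [Field F]
    (M : Matrix V V F) (A : Finset V) : Matrix A A F :=
  M.submatrix (fun a => a.1) (fun a => a.1)

/-- Diagonal 0/1 matrix with 1's exactly at positions in `A`. -/
def indDiag {V F : Type*} [Fintype V] [DecidableEq V] [Field F]
    (A : Finset V) : Matrix V V F :=
  Matrix.diagonal (fun v => if v ∈ A then (1 : F) else 0)

theorem Submodule.finrank_prod {K V W : Type*} [DivisionRing K] [AddCommGroup V] [Module K V]
    [AddCommGroup W] [Module K W] (p : Submodule K V) (q : Submodule K W)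
    [FiniteDimensional K p] [FiniteDimensional K q] :
    Module.finrank K (p.prod q) = Module.finrank K p + Module.finrank K q := by
  have h := LinearMap.finrank_range_of_inj (f := p.subtype.prodMap q.subtype)
    (Subtype.val_injective.prodMap Subtype.val_injective)
  rwa [LinearMap.range_prodMap, Submodule.range_subtype, Submodule.range_subtype,
    Module.finrank_prod] at h

namespace Matrix

theorem rank_inv_add_eq_rank_one_add_mul {R n : Type*} [CommRing R] [Fintype n] [DecidableEq n]
    {M : Matrix n n R} (hM : IsUnit M) (N : Matrix n n R) :
    (M⁻¹ + N).rank = (1 + M * N).rank := by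
  have hdet := (isUnit_iff_isUnit_det M).mp hM
  rw [← rank_mul_eq_right_of_isUnit_det M _ hdet, mul_add, mul_nonsing_inv M hdet]

variable {K m n : Type*} [Field K] [Fintype m] [Fintype n] [DecidableEq m] [DecidableEq n]

theorem rank_fromBlocks_zero_zero (A : Matrix m m K) (D : Matrix n n K) :
    (fromBlocks A 0 0 D).rank = A.rank + D.rank := by
  let b := (Pi.basisFun K m).prod (Pi.basisFun K n)
  have hblocks : fromBlocks A 0 0 D = LinearMap.toMatrix b b (A.toLin'.prodMap D.toLin') := by
    rw [LinearMap.toMatrix_prodMap, LinearMap.toMatrix_eq_toMatrix',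
      LinearMap.toMatrix_eq_toMatrix', LinearMap.toMatrix'_toLin', LinearMap.toMatrix'_toLin']
  rw [hblocks, rank_eq_finrank_range_toLin _ b b, toLin_toMatrix, LinearMap.range_prodMap,
    Submodule.finrank_prod, toLin'_apply', toLin'_apply']
  rfl

theorem rank_fromBlocks_zero₁₂_one (A : Matrix m m K) (C : Matrix n m K) :
    (fromBlocks A 0 C (1 : Matrix n n K)).rank = A.rank + Fintype.card n := by
  have hfactor : fromBlocks A 0 C (1 : Matrix n n K) =
      fromBlocks A 0 0 1 * fromBlocks (1 : Matrix m m K) 0 C 1 := by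
    simp [fromBlocks_multiply]
  rw [hfactor, rank_mul_eq_left_of_isUnit_det _ _ (by simp),
    rank_fromBlocks_zero_zero, rank_one]

end Matrix

section IndicatorBlocks

variable {V F : Type*} [Fintype V] [DecidableEq V] [Field F]

theorem psub_add_indDiag (M : Matrix V V F) (A : Finset V) :
    psub (M + indDiag A) A = psub M A + 1 := by
  ext a b
  simp [psub, indDiag, diagonal_apply, one_apply]

theorem submatrix_sumCompl_one_add_mul_indDiag (M : Matrix V V F) (A : Finset V) :
    (1 + M * indDiag A).submatrix (Equiv.sumCompl (· ∈ A)) (Equiv.sumCompl (· ∈ A)) =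
      fromBlocks (psub M A + 1) 0 (M.submatrix Subtype.val Subtype.val) 1 := by
  ext (i | i) (j | j)
  · simp [psub, indDiag, mul_diagonal, one_apply, add_comm]
  · simp [indDiag, mul_diagonal, one_apply, ne_of_mem_of_not_mem i.2 j.2, j.2]
  · simp [indDiag, mul_diagonal, one_apply, (ne_of_mem_of_not_mem j.2 i.2).symm, j.2]
  · simp [indDiag, mul_diagonal, one_apply, Subtype.ext_iff, j.2]

theorem rank_one_add_mul_indDiag (M : Matrix V V F) (A : Finset V) :
    (1 + M * indDiag A).rank = (psub M A + 1).rank + (Finset.univ \ A).card := by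
  rw [← rank_submatrix _ (Equiv.sumCompl (· ∈ A)) (Equiv.sumCompl (· ∈ A)),
    submatrix_sumCompl_one_add_mul_indDiag, rank_fromBlocks_zero₁₂_one]
  simp [Fintype.card_subtype, Finset.filter_not]

end IndicatorBlocks

theorem rank_inv_add_indicator
    {V F : Type*} [Fintype V] [DecidableEq V] [Field F]
    (M : Matrix V V F) (hM : IsUnit M) (A : Finset V) :
    ((M⁻¹ + indDiag A).rank = (Finset.univ \ A).card + (psub M A + 1).rank) ∧
      (M.rank : ℤ) - ((A.card : ℤ) - ((psub (M + indDiag A) A).rank : ℤ)) =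
        ((M⁻¹ + indDiag A).rank : ℤ) := by
  have hrank : (M⁻¹ + indDiag A).rank = (Finset.univ \ A).card + (psub M A + 1).rank := by
    rw [rank_inv_add_eq_rank_one_add_mul hM, rank_one_add_mul_indDiag, add_comm]
  refine ⟨hrank, ?_⟩
  rw [psub_add_indDiag, rank_of_isUnit M hM, hrank, Finset.card_sdiff_of_subset A.subset_univ,
    Finset.card_univ]
  push_cast [A.card_le_univ]
  ring
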